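/- Fix positive integers I, T, J, K, q. Let Φ ∈ ℝ^{T×K}, V ∈ ℝ^{J×K}, β ∈ ℝ^{q×K}, s_1,…,s_K > 0, and set Λ_f = diag(1/s_1²,…,1/s_K²). Let W = V⊙Φ be the column-wise Khatri-Rao product. For each i = 1,…,I, let S_i be a subset of the row indices of W, let M_i be the submatrix of W formed by the rows in S_i, let x_i ∈ ℝ^{S_i}, z_i ∈ ℝ^q, and let Λ_i be a symmetric positive definite matrix indexed by S_i × S_i. Assume each Λ_f + M_iᵀΛ_iM_i is invertible, set Σ_i = (Λ_f + M_iᵀΛ_iM_i)⁻¹ and μ_i = Σ_i(Λ_fβᵀz_i + M_iᵀΛ_ix_i), and define L(Φ,V,β,s) = −(1/2)Σ_{i=1}^I (x_iᵀΛ_ix_i + z_iᵀβΛ_fβᵀz_i − μ_iᵀΣ_i⁻¹μ_i) + (1/2)(Σ_{i=1}^I (log det Λ_i + log det Σ_i) + I·log det Λ_f). Fix k ∈ {1,…,K} and nonzero reals c₁, c₂, c₃ with c₁c₂c₃ = 1, and let Φ′, V′, β′, s′ be obtained by replacing the k-th columns of Φ, V, β by c₁Φ_k, c₂V_k, c₃β_k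 and s_k² by c₃²s_k² (other entries unchanged). Then L(Φ′,V′,β′,s′) = L(Φ,V,β,s). -/

import Mathlib

/-!
The rescaling is a congruence by the invertible diagonal matrix `D = diag(1, …, c₃⁻¹, …, 1)`:
it sends `M_i ↦ M_i D`, `β ↦ β D⁻ᵀ` and `Λ_f ↦ Dᵀ Λ_f D`. The posterior precision then becomes
`Dᵀ (Λ_f + M_iᵀ Λ_i M_i) D`, so `Σ_i ↦ D⁻¹ Σ_i D⁻ᵀ` and `μ_i ↦ D⁻¹ μ_i`. All quadratic forms
are unchanged, while `log det Σ_i` and `log det Λ_f` shift by `∓ 2 log |det D|`, which cancel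
subject by subject.
-/

open Matrix

namespace Matrix

section KhatriRao

variable {m n κ α : Type*} [Fintype κ] [DecidableEq κ] [CommSemiring α]

def khatriRao (A : Matrix m κ α) (B : Matrix n κ α) : Matrix (m × n) κ α :=
  fun r l => A r.1 l * B r.2 l

theorem khatriRao_mul_diagonal (A : Matrix m κ α) (B : Matrix n κ α) (a b : κ → α) :
    khatriRao (A * diagonal a) (B * diagonal b) = khatriRao A B * diagonal (a * b) := by
  ext r l
  simp only [khatriRao, mul_diagonal, Pi.mul_apply]
  ring

theorem mul_diagonal_update_one (A : Matrix m κ α) (k : κ) (c : α) :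
    A * diagonal (Function.update 1 k c) = fun i l => if l = k then c * A i l else A i l := by
  ext i l
  rw [mul_diagonal, Function.update_apply]
  split_ifs <;> simp [mul_comm]

theorem khatriRao_mul_diagonal_update_one (A : Matrix m κ α) (B : Matrix n κ α) (k : κ)
    (a b : α) :
    khatriRao (A * diagonal (Function.update 1 k a)) (B * diagonal (Function.update 1 k b))
      = khatriRao A B * diagonal (Function.update 1 k (a * b)) := by
  rw [khatriRao_mul_diagonal, ← Function.update_mul, mul_one]

end KhatriRao

section Field

variable {κ α : Type*} [Fintype κ] [DecidableEq κ] [Field α]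

theorem inv_diagonal_update_one (k : κ) {c : α} (hc : c ≠ 0) :
    (diagonal (Function.update 1 k c))⁻¹ = diagonal (Function.update 1 k c⁻¹) := by
  have hprod : Function.update (1 : κ → α) k c⁻¹ * Function.update (1 : κ → α) k c = 1 := by
    rw [← Function.update_mul, mul_one, inv_mul_cancel₀ hc, Function.update_one]
  exact inv_eq_left_inv <|
    (diagonal_mul_diagonal _ _).trans ((congrArg diagonal hprod).trans diagonal_one)

theorem diagonal_inv_sq_rescale (d : κ → α) (k : κ) {c : α} (hc : c ≠ 0) :
    diagonal (fun l => (if l = k then c ^ 2 * d l else d l)⁻¹)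
      = (diagonal (Function.update 1 k c⁻¹))ᵀ * diagonal (fun l => (d l)⁻¹)
        * diagonal (Function.update 1 k c⁻¹) := by
  rw [diagonal_transpose, diagonal_mul_diagonal, diagonal_mul_diagonal]
  congr 1
  funext l
  simp only [Function.update_apply, Pi.one_apply]
  split_ifs <;> field_simp

end Field

variable {κ : Type*} [Fintype κ] [DecidableEq κ] {D : Matrix κ κ ℝ}

theorem dotProduct_mulVec_inv_congr (hD : IsUnit D.det) (S : Matrix κ κ ℝ) (u : κ → ℝ) :
    (D⁻¹ *ᵥ u) ⬝ᵥ ((D⁻¹ * S * D⁻¹ᵀ)⁻¹ *ᵥ (D⁻¹ *ᵥ u)) = u ⬝ᵥ (S⁻¹ *ᵥ u) := by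
  have hDt : IsUnit Dᵀ.det := by rwa [det_transpose]
  rw [Matrix.mul_inv_rev, Matrix.mul_inv_rev, transpose_nonsing_inv, nonsing_inv_nonsing_inv _ hDt,
    nonsing_inv_nonsing_inv _ hD, mulVec_mulVec, Matrix.mul_assoc,
    mul_nonsing_inv_cancel_right _ _ hD, ← mulVec_mulVec, dotProduct_mulVec, vecMul_transpose,
    mulVec_mulVec, mul_nonsing_inv _ hD, one_mulVec]

end Matrix

theorem Real.log_det_mul_mul {κ : Type*} [Fintype κ] [DecidableEq κ] {P S Q : Matrix κ κ ℝ}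
    (hP : P.det ≠ 0) (hS : S.det ≠ 0) (hQ : Q.det ≠ 0) :
    Real.log (P * S * Q).det = Real.log P.det + Real.log S.det + Real.log Q.det := by
  rw [det_mul, det_mul, Real.log_mul (mul_ne_zero hP hS) hQ, Real.log_mul hP hS]

namespace Spaco

variable {m κ p : Type*} [Fintype m] [Fintype κ] [DecidableEq κ] [Fintype p]

noncomputable def posteriorCov (Λ : Matrix m m ℝ) (Λf : Matrix κ κ ℝ) (M : Matrix m κ ℝ) :
    Matrix κ κ ℝ :=
  (Λf + Mᵀ * Λ * M)⁻¹

noncomputable def posteriorMean (Λ : Matrix m m ℝ) (x : m → ℝ) (z : p → ℝ)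
    (Λf : Matrix κ κ ℝ) (M : Matrix m κ ℝ) (B : Matrix p κ ℝ) : κ → ℝ :=
  posteriorCov Λ Λf M *ᵥ (Λf *ᵥ (Bᵀ *ᵥ z) + Mᵀ *ᵥ (Λ *ᵥ x))

/-- The `i`-th summand of `L`, with the term `I · log det Λ_f` split evenly among the subjects. -/
noncomputable def subjectLogLik [DecidableEq m] (Λ : Matrix m m ℝ) (x : m → ℝ) (z : p → ℝ)
    (Λf : Matrix κ κ ℝ) (M : Matrix m κ ℝ) (B : Matrix p κ ℝ) : ℝ :=
  -(1/2) * (x ⬝ᵥ Λ *ᵥ x + z ⬝ᵥ (B * Λf * Bᵀ) *ᵥ z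
      - posteriorMean Λ x z Λf M B ⬝ᵥ (posteriorCov Λ Λf M)⁻¹ *ᵥ posteriorMean Λ x z Λf M B)
    + (1/2) * (Real.log Λ.det + Real.log (posteriorCov Λ Λf M).det + Real.log Λf.det)

variable {D : Matrix κ κ ℝ}

theorem posteriorCov_congr (Λ : Matrix m m ℝ) (Λf : Matrix κ κ ℝ) (M : Matrix m κ ℝ) :
    posteriorCov Λ (Dᵀ * Λf * D) (M * D) = D⁻¹ * posteriorCov Λ Λf M * D⁻¹ᵀ := by
  have hprec : Dᵀ * Λf * D + (M * D)ᵀ * Λ * (M * D) = Dᵀ * (Λf + Mᵀ * Λ * M) * D := by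
    simp only [transpose_mul, Matrix.mul_add, Matrix.add_mul, Matrix.mul_assoc]
  rw [posteriorCov, posteriorCov, hprec, Matrix.mul_inv_rev, Matrix.mul_inv_rev,
    transpose_nonsing_inv, ← Matrix.mul_assoc]

theorem posteriorMean_congr (hD : IsUnit D.det) (Λ : Matrix m m ℝ) (x : m → ℝ) (z : p → ℝ)
    (Λf : Matrix κ κ ℝ) (M : Matrix m κ ℝ) (B : Matrix p κ ℝ) :
    posteriorMean Λ x z (Dᵀ * Λf * D) (M * D) (B * D⁻¹ᵀ)
      = D⁻¹ *ᵥ posteriorMean Λ x z Λf M B := by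
  have hDt : IsUnit Dᵀ.det := by rwa [det_transpose]
  have hw : (Dᵀ * Λf * D) *ᵥ ((B * D⁻¹ᵀ)ᵀ *ᵥ z) + (M * D)ᵀ *ᵥ (Λ *ᵥ x)
      = Dᵀ *ᵥ (Λf *ᵥ (Bᵀ *ᵥ z) + Mᵀ *ᵥ (Λ *ᵥ x)) := by
    rw [transpose_mul, transpose_transpose, transpose_mul, mulVec_add]
    simp only [mulVec_mulVec, Matrix.mul_assoc, mul_nonsing_inv_cancel_left _ _ hD]
  rw [posteriorMean, posteriorMean, posteriorCov_congr, hw, mulVec_mulVec, transpose_nonsing_inv,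
    Matrix.mul_assoc, nonsing_inv_mul _ hDt, Matrix.mul_one, ← mulVec_mulVec]

theorem subjectLogLik_congr [DecidableEq m] (hD : IsUnit D.det) (Λ : Matrix m m ℝ) (x : m → ℝ)
    (z : p → ℝ) {Λf : Matrix κ κ ℝ} (hΛf : Λf.det ≠ 0) {M : Matrix m κ ℝ}
    (hCov : (posteriorCov Λ Λf M).det ≠ 0) (B : Matrix p κ ℝ) :
    subjectLogLik Λ x z (Dᵀ * Λf * D) (M * D) (B * D⁻¹ᵀ) = subjectLogLik Λ x z Λf M B := by
  have hDinv : IsUnit D⁻¹.det := isUnit_nonsing_inv_det D hD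
  have hDt : IsUnit Dᵀ.det := by rwa [det_transpose]
  have hDinvt : IsUnit D⁻¹ᵀ.det := by rwa [det_transpose]
  have hB : B * D⁻¹ᵀ * (Dᵀ * Λf * D) * (B * D⁻¹ᵀ)ᵀ = B * Λf * Bᵀ := by
    rw [transpose_mul, transpose_transpose, transpose_nonsing_inv]
    simp only [Matrix.mul_assoc, mul_nonsing_inv_cancel_left _ _ hD,
      nonsing_inv_mul_cancel_left _ _ hDt]
  rw [subjectLogLik, subjectLogLik, posteriorMean_congr hD, posteriorCov_congr,
    dotProduct_mulVec_inv_congr hD, hB, Real.log_det_mul_mul hDinv.ne_zero hCov hDinvt.ne_zero,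
    Real.log_det_mul_mul hDt.ne_zero hΛf hD.ne_zero]
  simp only [det_transpose, det_nonsing_inv, Ring.inverse_eq_inv', Real.log_inv]
  ring

end Spaco

open Spaco

theorem spaco_marginal_loglik_invariance_general
    {I T J K q : ℕ}
    (Φ : Matrix (Fin T) (Fin K) ℝ) (V : Matrix (Fin J) (Fin K) ℝ)
    (β : Matrix (Fin q) (Fin K) ℝ) (s : Fin K → ℝ) (hs : ∀ l, 0 < s l)
    (n : Fin I → ℕ) (e : ∀ i, Fin (n i) → Fin J × Fin T)
    (x : ∀ i, Fin (n i) → ℝ) (z : Fin I → Fin q → ℝ)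
    (Λ : ∀ i, Matrix (Fin (n i)) (Fin (n i)) ℝ)
    (k : Fin K) (c₁ c₂ c₃ : ℝ) (hc₃ : c₃ ≠ 0)
    (hc : c₁ * c₂ * c₃ = 1) :
    -- the submatrix of the Khatri-Rao product V⊙Φ picked out by the rows in S_i
    let M : Matrix (Fin T) (Fin K) ℝ → Matrix (Fin J) (Fin K) ℝ →
        ∀ i : Fin I, Matrix (Fin (n i)) (Fin K) ℝ :=
      fun Φv Vv i => fun r l => Vv (e i r).1 l * Φv (e i r).2 l
    -- the marginal log-likelihood as a function of (Φ, V, β, s²)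
    let L : Matrix (Fin T) (Fin K) ℝ → Matrix (Fin J) (Fin K) ℝ →
        Matrix (Fin q) (Fin K) ℝ → (Fin K → ℝ) → ℝ :=
      fun Φv Vv βv s2 =>
        let Λf : Matrix (Fin K) (Fin K) ℝ := Matrix.diagonal fun l => (s2 l)⁻¹
        let Sg : ∀ i : Fin I, Matrix (Fin K) (Fin K) ℝ :=
          fun i => (Λf + (M Φv Vv i)ᵀ * Λ i * M Φv Vv i)⁻¹
        let μ : ∀ i : Fin I, Fin K → ℝ :=
          fun i => (Sg i).mulVec (Λf.mulVec (βvᵀ.mulVec (z i))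
            + (M Φv Vv i)ᵀ.mulVec ((Λ i).mulVec (x i)))
        (-(1/2) * (∑ i, (x i ⬝ᵥ (Λ i).mulVec (x i)
              + z i ⬝ᵥ (βv * Λf * βvᵀ).mulVec (z i)
              - μ i ⬝ᵥ ((Sg i)⁻¹).mulVec (μ i)))
          + (1/2) * ((∑ i, (Real.log (Λ i).det + Real.log (Sg i).det))
              + (I : ℝ) * Real.log Λf.det))
    -- rescaled parameters
    let Φ' : Matrix (Fin T) (Fin K) ℝ := fun t l => if l = k then c₁ * Φ t l else Φ t l
    let V' : Matrix (Fin J) (Fin K) ℝ := fun j l => if l = k then c₂ * V j l else V j l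
    let β' : Matrix (Fin q) (Fin K) ℝ := fun i l => if l = k then c₃ * β i l else β i l
    let s2' : Fin K → ℝ := fun l => if l = k then c₃ ^ 2 * s l ^ 2 else s l ^ 2
    -- each Λ_f + M_iᵀΛ_iM_i is invertible (at the original parameters)
    ∀ _hinv : (∀ i, IsUnit ((Matrix.diagonal fun l => (s l ^ 2)⁻¹)
        + (M Φ V i)ᵀ * Λ i * M Φ V i)),
      L Φ' V' β' s2' = L Φ V β (fun l => s l ^ 2) := by
  intro M L Φ' V' β' s2' hinv
  set D : Matrix (Fin K) (Fin K) ℝ := diagonal (Function.update 1 k c₃⁻¹) with hD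
  have hL : ∀ Φv Vv βv s2, L Φv Vv βv s2 = ∑ i, subjectLogLik (Λ i) (x i) (z i)
      (diagonal fun l => (s2 l)⁻¹) (M Φv Vv i) βv := by
    intro Φv Vv βv s2
    simp only [L, subjectLogLik, posteriorCov, posteriorMean, Finset.sum_add_distrib,
      Finset.sum_sub_distrib, ← Finset.mul_sum, Finset.sum_const, Finset.card_univ,
      Fintype.card_fin, nsmul_eq_mul]
  have hΛf : diagonal (fun l => (s2' l)⁻¹) = Dᵀ * diagonal (fun l => (s l ^ 2)⁻¹) * D :=
    diagonal_inv_sq_rescale _ k hc₃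
  have hM : ∀ i, M Φ' V' i = M Φ V i * D := fun i => by
    have hc₂₁ : c₂ * c₁ = c₃⁻¹ := eq_inv_of_mul_eq_one_left (by linear_combination hc)
    have hkr : khatriRao V' Φ' = khatriRao V Φ * D := by
      rw [show V' = _ from (mul_diagonal_update_one V k c₂).symm,
        show Φ' = _ from (mul_diagonal_update_one Φ k c₁).symm,
        khatriRao_mul_diagonal_update_one, hc₂₁]
    exact congrArg (submatrix · (e i) id) hkr
  have hβ : β' = β * D⁻¹ᵀ := by
    rw [hD, inv_diagonal_update_one k (inv_ne_zero hc₃), inv_inv, diagonal_transpose,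
      mul_diagonal_update_one]
  rw [hL, hL, hΛf, hβ]
  refine Finset.sum_congr rfl fun i _ => ?_
  rw [hM]
  refine subjectLogLik_congr (by simp [hD, Finset.prod_update_of_mem, hc₃]) _ _ _ ?_ ?_ _
  · rw [det_diagonal]
    exact Finset.prod_ne_zero_iff.mpr fun l _ => inv_ne_zero (pow_ne_zero 2 (hs l).ne')
  · exact (isUnit_nonsing_inv_det _ ((isUnit_iff_isUnit_det _).mp (hinv i))).ne_zero

/-- Proposition 1 of the paper: the marginal log-likelihood of the SPACO model is
invariant under the rescaling (Φ_k, V_k, β_k, s_k²) ↦ (c₁Φ_k, c₂V_k, c₃β_k, c₃²s_k²)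
with c₁c₂c₃ = 1. The subsets S_i of row indices of W = V⊙Φ are modeled by injections
e i : Fin (n i) → Fin J × Fin T, and M_i is the corresponding submatrix of W. -/
theorem spaco_marginal_loglik_invariance
    {I T J K q : ℕ} (hI : 0 < I) (hT : 0 < T) (hJ : 0 < J) (hK : 0 < K) (hq : 0 < q)
    (Φ : Matrix (Fin T) (Fin K) ℝ) (V : Matrix (Fin J) (Fin K) ℝ)
    (β : Matrix (Fin q) (Fin K) ℝ) (s : Fin K → ℝ) (hs : ∀ l, 0 < s l)
    (n : Fin I → ℕ) (e : ∀ i, Fin (n i) → Fin J × Fin T)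
    (he : ∀ i, Function.Injective (e i))
    (x : ∀ i, Fin (n i) → ℝ) (z : Fin I → Fin q → ℝ)
    (Λ : ∀ i, Matrix (Fin (n i)) (Fin (n i)) ℝ)
    (hΛ : ∀ i, (Λ i).PosDef)
    (k : Fin K) (c₁ c₂ c₃ : ℝ) (hc₁ : c₁ ≠ 0) (hc₂ : c₂ ≠ 0) (hc₃ : c₃ ≠ 0)
    (hc : c₁ * c₂ * c₃ = 1) :
    -- the submatrix of the Khatri-Rao product V⊙Φ picked out by the rows in S_i
    let M : Matrix (Fin T) (Fin K) ℝ → Matrix (Fin J) (Fin K) ℝ →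
        ∀ i : Fin I, Matrix (Fin (n i)) (Fin K) ℝ :=
      fun Φv Vv i => fun r l => Vv (e i r).1 l * Φv (e i r).2 l
    -- the marginal log-likelihood as a function of (Φ, V, β, s²)
    let L : Matrix (Fin T) (Fin K) ℝ → Matrix (Fin J) (Fin K) ℝ →
        Matrix (Fin q) (Fin K) ℝ → (Fin K → ℝ) → ℝ :=
      fun Φv Vv βv s2 =>
        let Λf : Matrix (Fin K) (Fin K) ℝ := Matrix.diagonal fun l => (s2 l)⁻¹
        let Sg : ∀ i : Fin I, Matrix (Fin K) (Fin K) ℝ :=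
          fun i => (Λf + (M Φv Vv i)ᵀ * Λ i * M Φv Vv i)⁻¹
        let μ : ∀ i : Fin I, Fin K → ℝ :=
          fun i => (Sg i).mulVec (Λf.mulVec (βvᵀ.mulVec (z i))
            + (M Φv Vv i)ᵀ.mulVec ((Λ i).mulVec (x i)))
        (-(1/2) * (∑ i, (x i ⬝ᵥ (Λ i).mulVec (x i)
              + z i ⬝ᵥ (βv * Λf * βvᵀ).mulVec (z i)
              - μ i ⬝ᵥ ((Sg i)⁻¹).mulVec (μ i)))
          + (1/2) * ((∑ i, (Real.log (Λ i).det + Real.log (Sg i).det))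
              + (I : ℝ) * Real.log Λf.det))
    -- rescaled parameters
    let Φ' : Matrix (Fin T) (Fin K) ℝ := fun t l => if l = k then c₁ * Φ t l else Φ t l
    let V' : Matrix (Fin J) (Fin K) ℝ := fun j l => if l = k then c₂ * V j l else V j l
    let β' : Matrix (Fin q) (Fin K) ℝ := fun i l => if l = k then c₃ * β i l else β i l
    let s2' : Fin K → ℝ := fun l => if l = k then c₃ ^ 2 * s l ^ 2 else s l ^ 2
    -- each Λ_f + M_iᵀΛ_iM_i is invertible (at the original parameters)
    ∀ _hinv : (∀ i, IsUnit ((Matrix.diagonal fun l => (s l ^ 2)⁻¹)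
        + (M Φ V i)ᵀ * Λ i * M Φ V i)),
      L Φ' V' β' s2' = L Φ V β (fun l => s l ^ 2) :=
  spaco_marginal_loglik_invariance_general Φ V β s hs n e x z Λ k c₁ c₂ c₃ hc₃ hc
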